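/- arXiv:2310.20219 — 8 statements merged into one kernel-verified Lean document; each statement's English description precedes it below -/
import Mathlib

section
/- Let q be a complex number with q^6 ≠ 1 and let n be a nonnegative integer. Then Σ_{k=1}^{n} q^{6n−6k} · [2k]_q · [2k+1]_q · [2k+2]_q · [2k+3]_q · [4k+3]_q = ( [2n]_q · [2n+1]_q · [2n+2]_q · [2n+3]_q · [2n+4]_q · [2n+5]_q ) / [6]_q. -/
/-! Both sides satisfy `S (n + 1) = q ^ 6 * S n + (n + 1)-st summand` and vanish at `n = 0`.
After cancelling the common factor `[2n+2][2n+3][2n+4][2n+5]`, the recursion for the right-hand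
side becomes `q^6 [2n][2n+1] + [6][4n+7] = [2n+6][2n+7]`, the case `t = q^6, x = q^(2n),
y = q^(2n+1)` of `t (1 - x) (1 - y) + (1 - t) (1 - t x y) = (1 - t x) (1 - t y)`. -/

open BigOperators Finset

/-- The q-number `[m]_q = (1 - q^m)/(1 - q)`. -/
noncomputable def qNum (q : ℂ) (m : ℕ) : ℂ := (1 - q ^ m) / (1 - q)

theorem Finset.sum_Icc_pow_sub_mul_eq_of_recurrence {R : Type*} [CommSemiring R] (c : R)
    (f S : ℕ → R) (h0 : S 0 = 0) (hS : ∀ n, c * S n + f (n + 1) = S (n + 1)) (n : ℕ) :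
    ∑ k ∈ Icc 1 n, c ^ (n - k) * f k = S n := by
  induction n with
  | zero => simp [h0]
  | succ n ih =>
    have hpow : ∀ k ∈ Icc 1 n, c ^ (n + 1 - k) * f k = c * (c ^ (n - k) * f k) := by
      intro k hk
      rw [Nat.sub_add_comm (mem_Icc.1 hk).2, pow_succ', mul_assoc]
    rw [sum_Icc_succ_top (Nat.le_add_left 1 n), sum_congr rfl hpow, ← mul_sum, ih, ← hS,
      Nat.sub_self, pow_zero, one_mul]

theorem qNum_ne_zero {q : ℂ} {m : ℕ} (hm : q ^ m ≠ 1) : qNum q m ≠ 0 := by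
  have hq : q ≠ 1 := by rintro rfl; exact hm (one_pow m)
  exact div_ne_zero (sub_ne_zero.2 hm.symm) (sub_ne_zero.2 hq.symm)

theorem pow_mul_qNum_mul_qNum_add_qNum_mul_qNum (q : ℂ) (a m m' : ℕ) :
    q ^ a * qNum q m * qNum q m' + qNum q a * qNum q (m + m' + a) =
      qNum q (m + a) * qNum q (m' + a) := by
  rcases eq_or_ne q 1 with rfl | hq
  · simp [qNum]
  · have hq' : 1 - q ≠ 0 := sub_ne_zero.2 hq.symm
    simp only [qNum]
    field_simp
    ring

theorem q_analogue_six_rhs_recurrence (q : ℂ) (h6 : qNum q 6 ≠ 0) (n : ℕ) :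
    q ^ 6 * (qNum q (2 * n) * qNum q (2 * n + 1) * qNum q (2 * n + 2) * qNum q (2 * n + 3) *
        qNum q (2 * n + 4) * qNum q (2 * n + 5) / qNum q 6) +
      qNum q (2 * (n + 1)) * qNum q (2 * (n + 1) + 1) * qNum q (2 * (n + 1) + 2) *
        qNum q (2 * (n + 1) + 3) * qNum q (4 * (n + 1) + 3) =
    qNum q (2 * (n + 1)) * qNum q (2 * (n + 1) + 1) * qNum q (2 * (n + 1) + 2) *
        qNum q (2 * (n + 1) + 3) * qNum q (2 * (n + 1) + 4) * qNum q (2 * (n + 1) + 5) /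
          qNum q 6 := by
  have key := pow_mul_qNum_mul_qNum_add_qNum_mul_qNum q 6 (2 * n) (2 * n + 1)
  rw [mul_div_assoc', div_add' _ _ _ h6, div_left_inj' h6]
  ring_nf at key ⊢
  linear_combination
    qNum q (2 + n * 2) * qNum q (3 + n * 2) * qNum q (4 + n * 2) * qNum q (5 + n * 2) * key

theorem q_analogue_six (q : ℂ) (hq : q ^ 6 ≠ 1) (n : ℕ) :
    ∑ k ∈ Finset.Icc 1 n,
        q ^ (6 * n - 6 * k) * qNum q (2 * k) * qNum q (2 * k + 1) * qNum q (2 * k + 2) *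
          qNum q (2 * k + 3) * qNum q (4 * k + 3) =
      qNum q (2 * n) * qNum q (2 * n + 1) * qNum q (2 * n + 2) * qNum q (2 * n + 3) *
        qNum q (2 * n + 4) * qNum q (2 * n + 5) / qNum q 6 := by
  rw [← sum_Icc_pow_sub_mul_eq_of_recurrence (q ^ 6)
    (fun k ↦ qNum q (2 * k) * qNum q (2 * k + 1) * qNum q (2 * k + 2) * qNum q (2 * k + 3) *
      qNum q (4 * k + 3)) _ (by simp [qNum]) (q_analogue_six_rhs_recurrence q (qNum_ne_zero hq))]
  refine sum_congr rfl fun k _ ↦ ?_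
  rw [← Nat.mul_sub, pow_mul]
  ring
end

section
/- (Euler's telescoping lemma.) Let F be a field, let n be a nonnegative integer, and let u, v : ℕ → F be sequences; set t_k := u_k − v_k for each k. Assume t_0 ≠ 0, u_0 ≠ 0, and v_k ≠ 0 for all 1 ≤ k ≤ n. Then Σ_{k=0}^{n} (t_k / t_0) · ( (Π_{j=0}^{k−1} u_j) / (Π_{j=1}^{k} v_j) ) = (u_0 / t_0) · ( (Π_{j=1}^{n} u_j) / (Π_{j=1}^{n} v_j) − v_0 / u_0 ). -/
open BigOperators Finset

/-!
Write `P k = ∏_{j<k} u j` and `Q k = ∏_{j=1}^{k} v j`. For `k ≥ 1` the `k`-th summand, multiplied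
by `u 0 - v 0`, is `P (k+1) / Q k - P k / Q (k-1)`, since `u k * P k = P (k+1)` and
`v k / Q k = 1 / Q (k-1)`; the sum therefore telescopes to `P (n+1) / Q n - v 0`.
-/

theorem sum_range_sub_mul_prod_div_prod {F : Type*} [Field F] (n : ℕ) (u v : ℕ → F)
    (hv : ∀ k : ℕ, 1 ≤ k → k ≤ n → v k ≠ 0) :
    ∑ k ∈ range (n + 1), (u k - v k) * ((∏ j ∈ range k, u j) / ∏ j ∈ Icc 1 k, v j) =
      (∏ j ∈ range (n + 1), u j) / (∏ j ∈ Icc 1 n, v j) - v 0 := by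
  induction n with
  | zero => simp
  | succ n ih =>
    have hvn : v (n + 1) ≠ 0 := hv _ (by omega) le_rfl
    rw [sum_range_succ, ih fun k h1 h2 => hv k h1 (by omega), prod_range_succ _ (n + 1),
      prod_Icc_succ_top (by omega) v]
    field_simp
    ring

theorem euler_telescoping_general {F : Type*} [Field F] (n : ℕ) (u v : ℕ → F)
    (hu0 : u 0 ≠ 0)
    (hv : ∀ k : ℕ, 1 ≤ k → k ≤ n → v k ≠ 0) :
    ∑ k ∈ Finset.range (n + 1),
        ((u k - v k) / (u 0 - v 0)) *
          ((∏ j ∈ Finset.range k, u j) / (∏ j ∈ Finset.Icc 1 k, v j)) =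
      (u 0 / (u 0 - v 0)) *
        ((∏ j ∈ Finset.Icc 1 n, u j) / (∏ j ∈ Finset.Icc 1 n, v j) - v 0 / u 0) := by
  have htelescope := sum_range_sub_mul_prod_div_prod n u v hv
  rw [prod_range_eq_mul_Ico u (by omega), Ico_add_one_right_eq_Icc] at htelescope
  simp only [div_mul_eq_mul_div _ (u 0 - v 0), ← sum_div, htelescope]
  field_simp

/-- Euler's telescoping lemma. -/
theorem euler_telescoping {F : Type*} [Field F] (n : ℕ) (u v : ℕ → F)
    (ht0 : u 0 - v 0 ≠ 0) (hu0 : u 0 ≠ 0)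
    (hv : ∀ k : ℕ, 1 ≤ k → k ≤ n → v k ≠ 0) :
    ∑ k ∈ Finset.range (n + 1),
        ((u k - v k) / (u 0 - v 0)) *
          ((∏ j ∈ Finset.range k, u j) / (∏ j ∈ Finset.Icc 1 k, v j)) =
      (u 0 / (u 0 - v 0)) *
        ((∏ j ∈ Finset.Icc 1 n, u j) / (∏ j ∈ Finset.Icc 1 n, v j) - v 0 / u 0) :=
  euler_telescoping_general n u v hu0 hv
end

section
/- Let q and a be complex numbers with q ≠ 0, q ≠ 1, aq ≠ 1, and suppose 1 − a q^{2+3j} ≠ 0 for all relevant nonnegative integers j. Then for every positive integer n, Σ_{k=0}^{n−1} q^{−k} · ( (aq; q³)_k / (aq⁵; q³)_k ) · ( (1 − q^{2k+1}) / (1 − q) ) · ( (1 − a q^{2k+1})² / (1 − aq)² ) = ( (1 − q^n)² (1 − a q^n) / ( (1 − q)² (1 − aq) ) ) · ( (a q⁴; q³)_{n−1} / (a q⁵; q³)_{n−1} ) · q^{1−n}. -/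
/-!
Telescoping: the right-hand side `F n` vanishes at `n = 0` and satisfies
`F (k + 1) - F k = (k-th summand)`. For `k ≥ 1`, after cancelling the common factor
`q^(-k) (aq⁴; q³)_(k-1) / ((1-q)² (1-aq) (aq⁵; q³)_k)`, this difference equation is
the polynomial identity `cubic_polynomial_identity` in `q`, `a` and `u = q^(k-1)`.
-/

open BigOperators Finset

/-- The q-shifted factorial `(x; Q)_k = ∏_{j=0}^{k-1} (1 - x Q^j)`. -/
noncomputable def qPoch (x Q : ℂ) (k : ℕ) : ℂ := ∏ j ∈ Finset.range k, (1 - x * Q ^ j)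

lemma qPoch_zero (x Q : ℂ) : qPoch x Q 0 = 1 := prod_range_zero _

lemma qPoch_succ (x Q : ℂ) (k : ℕ) : qPoch x Q (k + 1) = qPoch x Q k * (1 - x * Q ^ k) :=
  prod_range_succ _ _

lemma qPoch_succ' (x Q : ℂ) (k : ℕ) : qPoch x Q (k + 1) = (1 - x) * qPoch (x * Q) Q k := by
  rw [qPoch, prod_range_succ', pow_zero, mul_one, mul_comm, qPoch]
  simp only [pow_succ', mul_assoc]

lemma qPoch_ne_zero {x Q : ℂ} {k : ℕ} (h : ∀ j < k, 1 - x * Q ^ j ≠ 0) : qPoch x Q k ≠ 0 :=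
  prod_ne_zero_iff.mpr fun j hj => h j (mem_range.mp hj)

lemma cubic_polynomial_identity {R : Type*} [CommRing R] (q a u : R) :
    (1 - q ^ 2 * u) ^ 2 * (1 - a * q ^ 2 * u) * (1 - a * q ^ 4 * u ^ 3)
        - q * (1 - q * u) ^ 2 * (1 - a * q * u) * (1 - a * q ^ 5 * u ^ 3)
      = (1 - q) * (1 - q ^ 3 * u ^ 2) * (1 - a * q ^ 3 * u ^ 2) ^ 2 := by
  ring

noncomputable def cubicSummand (q a : ℂ) (k : ℕ) : ℂ :=
  q ^ (-(k : ℤ)) * (qPoch (a * q) (q ^ 3) k / qPoch (a * q ^ 5) (q ^ 3) k) *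
    ((1 - q ^ (2 * k + 1)) / (1 - q)) * ((1 - a * q ^ (2 * k + 1)) ^ 2 / (1 - a * q) ^ 2)

noncomputable def cubicClosedForm (q a : ℂ) (n : ℕ) : ℂ :=
  ((1 - q ^ n) ^ 2 * (1 - a * q ^ n) / ((1 - q) ^ 2 * (1 - a * q))) *
    (qPoch (a * q ^ 4) (q ^ 3) (n - 1) / qPoch (a * q ^ 5) (q ^ 3) (n - 1)) * q ^ (1 - (n : ℤ))

lemma cubicClosedForm_zero (q a : ℂ) : cubicClosedForm q a 0 = 0 := by
  simp [cubicClosedForm]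

lemma cubicClosedForm_succ {q a : ℂ} (hq0 : q ≠ 0) (hq1 : q ≠ 1) (haq : a * q ≠ 1)
    (ha : ∀ j : ℕ, 1 - a * q ^ (2 + 3 * j) ≠ 0) (k : ℕ) :
    cubicClosedForm q a (k + 1) = cubicClosedForm q a k + cubicSummand q a k := by
  have h1q : 1 - q ≠ 0 := sub_ne_zero.mpr hq1.symm
  have h1aq : 1 - a * q ≠ 0 := sub_ne_zero.mpr haq.symm
  rcases k with _ | m
  · simp [cubicClosedForm, cubicSummand, qPoch_zero]
    field_simp
  have hB : ∀ j, 1 - a * q ^ 5 * (q ^ 3) ^ j ≠ 0 := fun j => by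
    convert ha (j + 1) using 2
    ring
  have hBm : qPoch (a * q ^ 5) (q ^ 3) m ≠ 0 := qPoch_ne_zero fun j _ => hB j
  have hBm' := hB m
  simp only [cubicClosedForm, cubicSummand]
  rw [show m + 1 + 1 - 1 = m + 1 from rfl, Nat.add_sub_cancel, qPoch_succ (a * q ^ 4),
    qPoch_succ (a * q ^ 5), qPoch_succ' (a * q),
    show (1 : ℤ) - (m + 1 + 1 : ℕ) = -(m + 1 : ℕ) by omega,
    show (1 : ℤ) - (m + 1 : ℕ) = -(m : ℕ) by omega]
  simp only [zpow_neg, zpow_natCast]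
  field_simp
  linear_combination qPoch (a * q ^ 4) (q ^ 3) m * q ^ m * cubic_polynomial_identity q a (q ^ m)

theorem cubic_indefinite_sum_general (q a : ℂ) (hq0 : q ≠ 0) (hq1 : q ≠ 1) (haq : a * q ≠ 1)
    (ha : ∀ j : ℕ, 1 - a * q ^ (2 + 3 * j) ≠ 0) (n : ℕ) :
    ∑ k ∈ Finset.range n,
        q ^ (-(k : ℤ)) * (qPoch (a * q) (q ^ 3) k / qPoch (a * q ^ 5) (q ^ 3) k) *
          ((1 - q ^ (2 * k + 1)) / (1 - q)) *
          ((1 - a * q ^ (2 * k + 1)) ^ 2 / (1 - a * q) ^ 2) =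
      ((1 - q ^ n) ^ 2 * (1 - a * q ^ n) / ((1 - q) ^ 2 * (1 - a * q))) *
        (qPoch (a * q ^ 4) (q ^ 3) (n - 1) / qPoch (a * q ^ 5) (q ^ 3) (n - 1)) *
        q ^ (1 - (n : ℤ)) :=
  sum_range_induction (cubicSummand q a) (cubicClosedForm q a) (cubicClosedForm_zero q a) n
    fun k _ => cubicClosedForm_succ hq0 hq1 haq ha k

theorem cubic_indefinite_sum (q a : ℂ) (hq0 : q ≠ 0) (hq1 : q ≠ 1) (haq : a * q ≠ 1)
    (ha : ∀ j : ℕ, 1 - a * q ^ (2 + 3 * j) ≠ 0) (n : ℕ) (hn : 0 < n) :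
    ∑ k ∈ Finset.range n,
        q ^ (-(k : ℤ)) * (qPoch (a * q) (q ^ 3) k / qPoch (a * q ^ 5) (q ^ 3) k) *
          ((1 - q ^ (2 * k + 1)) / (1 - q)) *
          ((1 - a * q ^ (2 * k + 1)) ^ 2 / (1 - a * q) ^ 2) =
      ((1 - q ^ n) ^ 2 * (1 - a * q ^ n) / ((1 - q) ^ 2 * (1 - a * q))) *
        (qPoch (a * q ^ 4) (q ^ 3) (n - 1) / qPoch (a * q ^ 5) (q ^ 3) (n - 1)) *
        q ^ (1 - (n : ℤ)) :=
  cubic_indefinite_sum_general q a hq0 hq1 haq ha n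
end

section
/- (Warnaar's q-analogue of the sum of the first n cubes.) Let q be a complex number with q² ≠ 1 and let n be a nonnegative integer. Then Σ_{k=1}^{n} q^{2n−2k} · ( [k]_q² · [2k]_q ) / [2]_q = ( [n]_q · [n+1]_q / [2]_q )². -/
/-!
Both sides vanish at `n = 0` and satisfy `a (n + 1) = q² a n + [n+1]² [2n+2] / [2]`.
For the sum this is immediate; for the right-hand side it follows from factoring
`[n+2]² - q² [n]² = ([n+2] - q [n]) ([n+2] + q [n]) = (1 + q^(n+1)) [2] [n+1]`
and `[n+1] (1 + q^(n+1)) = [2n+2]`.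
-/

open BigOperators Finset

theorem sum_Icc_pow_sub_mul_succ {R : Type*} [CommSemiring R] (x : R) (f : ℕ → R) (n : ℕ) :
    ∑ k ∈ Icc 1 (n + 1), x ^ (n + 1 - k) * f k =
      x * ∑ k ∈ Icc 1 n, x ^ (n - k) * f k + f (n + 1) := by
  rw [sum_Icc_succ_top (by omega), Nat.sub_self, pow_zero, one_mul, mul_sum]
  congr 1
  refine sum_congr rfl fun k hk => ?_
  rw [← mul_assoc, ← pow_succ', Nat.sub_add_comm (mem_Icc.mp hk).2]

/-- q-analogue of the triangular number `n (n + 1) / 2`. -/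
noncomputable def qTri (q : ℂ) (n : ℕ) : ℂ := qNum q n * qNum q (n + 1) / qNum q 2

theorem qNum_two_mul (q : ℂ) (m : ℕ) : qNum q (2 * m) = qNum q m * (1 + q ^ m) := by
  simp only [qNum, pow_mul']
  ring

section

variable {q : ℂ}

theorem qNum_two (hq : q ≠ 1) : qNum q 2 = 1 + q := by
  have : 1 - q ≠ 0 := sub_ne_zero.mpr hq.symm
  simp only [qNum]
  field_simp
  ring

theorem qNum_add_two_sub_mul (hq : q ≠ 1) (m : ℕ) :
    qNum q (m + 2) - q * qNum q m = 1 + q ^ (m + 1) := by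
  have : 1 - q ≠ 0 := sub_ne_zero.mpr hq.symm
  simp only [qNum]
  field_simp
  ring

theorem qNum_add_two_add_mul (hq : q ≠ 1) (m : ℕ) :
    qNum q (m + 2) + q * qNum q m = qNum q 2 * qNum q (m + 1) := by
  have : 1 - q ≠ 0 := sub_ne_zero.mpr hq.symm
  simp only [qNum]
  field_simp
  ring

theorem qTri_succ_sq (hq : q ^ 2 ≠ 1) (n : ℕ) :
    qTri q (n + 1) ^ 2 =
      q ^ 2 * qTri q n ^ 2 + qNum q (n + 1) ^ 2 * qNum q (2 * (n + 1)) / qNum q 2 := by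
  have hq1 : q ≠ 1 := by rintro rfl; simp at hq
  have hsub := qNum_add_two_sub_mul hq1 n
  have hadd := qNum_add_two_add_mul hq1 n
  have h2 : qNum q 2 ≠ 0 := by
    rw [qNum_two hq1]
    exact fun h => hq (by linear_combination (q - 1) * h)
  simp only [qTri, qNum_two_mul]
  field_simp
  linear_combination qNum q (n + 1) ^ 2 *
    ((qNum q (n + 2) + q * qNum q n) * hsub + (1 + q ^ (n + 1)) * hadd)

end

/-- Warnaar's q-analogue of the sum of the first n cubes. -/
theorem warnaar_q_cubes (q : ℂ) (hq : q ^ 2 ≠ 1) (n : ℕ) :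
    ∑ k ∈ Finset.Icc 1 n, q ^ (2 * n - 2 * k) * (qNum q k ^ 2 * qNum q (2 * k)) / qNum q 2 =
      (qNum q n * qNum q (n + 1) / qNum q 2) ^ 2 := by
  suffices h : ∀ n,
      ∑ k ∈ Icc 1 n, (q ^ 2) ^ (n - k) * (qNum q k ^ 2 * qNum q (2 * k) / qNum q 2) =
        qTri q n ^ 2 by
    rw [← qTri, ← h n]
    refine sum_congr rfl fun k _ => ?_
    rw [← Nat.mul_sub, pow_mul, mul_div_assoc]
  intro n
  induction n with
  | zero => simp [qTri, qNum]
  | succ n ih => rw [sum_Icc_pow_sub_mul_succ, ih, qTri_succ_sq hq, mul_div_assoc]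
end

section
/- (Warnaar's q-analogue of the sum of the first n natural numbers.) Let q be a complex number with q² ≠ 1 and let n be a nonnegative integer. Then Σ_{k=1}^{n} q^{2n−2k} · [k]_q = ( [n]_q · [n+1]_q ) / [2]_q. -/
open BigOperators Finset

/-!
Clearing denominators turns the identity into the polynomial identity
`(1 - q²) Σ_{k=1}^n q^{2n-2k} (1 - q^k) = (1 - q^n)(1 - q^{n+1})`, valid in every commutative
ring. Passing from `n` to `n + 1` multiplies the old sum by `q²` and adds the term `1 - q^{n+1}`,
and `q² (1 - q^n) + 1 - q² = 1 - q^{n+2}` closes the induction.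
-/

theorem sum_Icc_succ_pow_two_mul_sub_mul_eq {R : Type*} [Semiring R] (q : R) (f : ℕ → R) (n : ℕ) :
    ∑ k ∈ Icc 1 (n + 1), q ^ (2 * (n + 1) - 2 * k) * f k =
      q ^ 2 * ∑ k ∈ Icc 1 n, q ^ (2 * n - 2 * k) * f k + f (n + 1) := by
  rw [sum_Icc_succ_top (Nat.le_add_left 1 n), Nat.sub_self, pow_zero, one_mul, mul_sum]
  congr 1
  refine sum_congr rfl fun k hk => ?_
  have hkn : k ≤ n := (mem_Icc.mp hk).2
  rw [← mul_assoc, ← pow_add]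
  congr 2
  omega

theorem one_sub_sq_mul_sum_Icc_pow_mul_one_sub_pow {R : Type*} [CommRing R] (q : R) (n : ℕ) :
    (1 - q ^ 2) * ∑ k ∈ Icc 1 n, q ^ (2 * n - 2 * k) * (1 - q ^ k) =
      (1 - q ^ n) * (1 - q ^ (n + 1)) := by
  induction n with
  | zero => simp
  | succ n ih =>
    rw [sum_Icc_succ_pow_two_mul_sub_mul_eq]
    linear_combination q ^ 2 * ih

/-- Warnaar's q-analogue of the sum of the first n natural numbers. -/
theorem warnaar_q_triangular (q : ℂ) (hq : q ^ 2 ≠ 1) (n : ℕ) :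
    ∑ k ∈ Finset.Icc 1 n, q ^ (2 * n - 2 * k) * qNum q k =
      qNum q n * qNum q (n + 1) / qNum q 2 := by
  have hq2 : 1 - q ^ 2 ≠ 0 := sub_ne_zero.mpr hq.symm
  have hq1 : 1 - q ≠ 0 := sub_ne_zero.mpr fun h => hq (by rw [← h, one_pow])
  calc ∑ k ∈ Icc 1 n, q ^ (2 * n - 2 * k) * qNum q k
      = (∑ k ∈ Icc 1 n, q ^ (2 * n - 2 * k) * (1 - q ^ k)) / (1 - q) := by
        simp only [qNum, mul_div_assoc', sum_div]
    _ = (1 - q ^ n) * (1 - q ^ (n + 1)) / ((1 - q) * (1 - q ^ 2)) := by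
        rw [← one_sub_sq_mul_sum_Icc_pow_mul_one_sub_pow]
        field_simp
    _ = qNum q n * qNum q (n + 1) / qNum q 2 := by
        simp only [qNum]
        field_simp
end

section
/- Let q be a complex number with q ≠ 1 and let n be a nonnegative integer. Then Σ_{k=0}^{n} q^{2n−2k} · ( [2]_q · [k+1]_q² · [2k+2]_q − q^{k+1} · [2k+1]_q ) = [n+1]_q³ · [n+3]_q. -/
/-! Both sides satisfy `S (n + 1) = q ^ 2 * S n + t (n + 1)`, where `t k` is the `k`-th summand
without its power of `q`; for the right side this is a polynomial identity in `q` and `q ^ (n + 1)`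
once the denominators `1 - q` are cleared. -/

open BigOperators Finset

theorem Finset.sum_range_succ_pow_mul_eq_of_recurrence {R : Type*} [CommSemiring R]
    (c : R) (f g : ℕ → R) (h₀ : f 0 = g 0) (hsucc : ∀ n, f (n + 1) = c * f n + g (n + 1))
    (n : ℕ) : ∑ k ∈ range (n + 1), c ^ (n - k) * g k = f n := by
  induction n with
  | zero => simp [h₀]
  | succ n ih =>
    rw [sum_range_succ, Nat.sub_self, pow_zero, one_mul, hsucc, ← ih, mul_sum]
    congr 1
    refine sum_congr rfl fun k hk => ?_
    rw [Nat.sub_add_comm (Nat.le_of_lt_succ (mem_range.mp hk)), pow_succ', mul_assoc]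

theorem qNum_cube_mul_qNum_add_two_succ (q : ℂ) (hq : q ≠ 1) (n : ℕ) :
    qNum q (n + 2) ^ 3 * qNum q (n + 4) =
      q ^ 2 * (qNum q (n + 1) ^ 3 * qNum q (n + 3)) +
        (qNum q 2 * qNum q (n + 2) ^ 2 * qNum q (2 * (n + 1) + 2) -
          q ^ (n + 2) * qNum q (2 * (n + 1) + 1)) := by
  have h : (1 : ℂ) - q ≠ 0 := sub_ne_zero.mpr hq.symm
  simp only [qNum]
  field_simp
  ring

theorem q_analogue_a_one (q : ℂ) (hq : q ≠ 1) (n : ℕ) :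
    ∑ k ∈ Finset.range (n + 1),
        q ^ (2 * n - 2 * k) *
          (qNum q 2 * qNum q (k + 1) ^ 2 * qNum q (2 * k + 2) - q ^ (k + 1) * qNum q (2 * k + 1)) =
      qNum q (n + 1) ^ 3 * qNum q (n + 3) := by
  simp only [← Nat.mul_sub, pow_mul]
  refine sum_range_succ_pow_mul_eq_of_recurrence _ (fun n => qNum q (n + 1) ^ 3 * qNum q (n + 3))
    _ ?_ (qNum_cube_mul_qNum_add_two_succ q hq) n
  have h : (1 : ℂ) - q ≠ 0 := sub_ne_zero.mpr hq.symm
  simp only [qNum]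
  field_simp
  ring
end

section
/- Let q be a complex number with q³ ≠ 1 and q ≠ 1, and let n be a nonnegative integer. Then Σ_{k=1}^{n} q^{3n−3k} · ( [k]_q · [k+1]_q )² · [2k+1]_q = ( [n]_q · [n+1]_q · [n+2]_q )² / [3]_q. -/
open BigOperators Finset

theorem sum_Icc_pow_mul_sub_mul_eq {R : Type*} [CommRing R] (c : R) (f : ℕ → R) (n : ℕ) :
    ∑ k ∈ Icc 1 n, c ^ (n - k) * (f k - c * f (k - 1)) = f n - c ^ n * f 0 := by
  induction n with
  | zero => simp
  | succ n ih =>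
    have hshift : ∀ k ∈ Icc 1 n,
        c ^ (n + 1 - k) * (f k - c * f (k - 1)) = c * (c ^ (n - k) * (f k - c * f (k - 1))) := by
      intro k hk
      rw [Nat.sub_add_comm (mem_Icc.mp hk).2, pow_succ]
      ring
    rw [sum_Icc_succ_top (by omega), sum_congr rfl hshift, ← mul_sum, ih]
    simp only [Nat.sub_self, pow_zero, Nat.add_sub_cancel]
    ring

theorem qNum_sq_mul_qNum_eq_sub (q : ℂ) (hq : q ≠ 1) (hq3 : q ^ 3 ≠ 1) (j : ℕ) :
    (qNum q (j + 1) * qNum q (j + 2)) ^ 2 * qNum q (2 * j + 3) =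
      (qNum q (j + 1) * qNum q (j + 2) * qNum q (j + 3)) ^ 2 / qNum q 3
        - q ^ 3 * ((qNum q j * qNum q (j + 1) * qNum q (j + 2)) ^ 2 / qNum q 3) := by
  have h1 : (1 : ℂ) - q ≠ 0 := sub_ne_zero.mpr hq.symm
  have h3 : (1 : ℂ) - q ^ 3 ≠ 0 := sub_ne_zero.mpr hq3.symm
  simp only [qNum, pow_add, pow_mul]
  field_simp
  ring

theorem q_analogue_a_one_m_two (q : ℂ) (hq3 : q ^ 3 ≠ 1) (hq : q ≠ 1) (n : ℕ) :
    ∑ k ∈ Finset.Icc 1 n,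
        q ^ (3 * n - 3 * k) * (qNum q k * qNum q (k + 1)) ^ 2 * qNum q (2 * k + 1) =
      (qNum q n * qNum q (n + 1) * qNum q (n + 2)) ^ 2 / qNum q 3 := by
  set S : ℕ → ℂ := fun j ↦ (qNum q j * qNum q (j + 1) * qNum q (j + 2)) ^ 2 / qNum q 3
  have hterm : ∀ k ∈ Icc 1 n,
      q ^ (3 * n - 3 * k) * (qNum q k * qNum q (k + 1)) ^ 2 * qNum q (2 * k + 1) =
        (q ^ 3) ^ (n - k) * (S k - q ^ 3 * S (k - 1)) := by
    intro k hk
    obtain ⟨j, rfl⟩ : ∃ j, k = j + 1 := ⟨k - 1, by grind⟩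
    rw [← Nat.mul_sub, pow_mul, mul_assoc, Nat.add_sub_cancel, show 2 * (j + 1) + 1 = 2 * j + 3 by ring,
      qNum_sq_mul_qNum_eq_sub q hq hq3 j]
  rw [sum_congr rfl hterm, sum_Icc_pow_mul_sub_mul_eq]
  simp [S, qNum]
end

section
/- Let q be a complex number with q³ ≠ 1 and q ≠ 1, and let n be a nonnegative integer. Then Σ_{k=1}^{n} q^{3n−3k} · [k]_q · [k+1]_q² · [k+2]_q · [2k+2]_q = ( [n]_q · [n+1]_q² · [n+2]_q² · [n+3]_q ) / [3]_q. -/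
open BigOperators Finset

/-! The right-hand side times `[3]_q`, `S n = [n][n+1]²[n+2]²[n+3]`, satisfies
`S (n + 1) = q³ S n + [3] T (n + 1)`, where `T k` is the `k`-th summand without its power of `q`,
so the sum is the unrolled recurrence. Dividing out the common factor `[n+1][n+2]²[n+3]`,
the recurrence is the two-term identity `q³ [n][n+1] + [3][2n+4] = [n+3][n+4]`. -/

theorem Finset.sum_Icc_pow_mul_eq_of_recurrence {R : Type*} [CommSemiring R] (c : R)
    (f g : ℕ → R) (h0 : f 0 = 0) (hsucc : ∀ n, f (n + 1) = c * f n + g (n + 1)) (n : ℕ) :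
    ∑ k ∈ Icc 1 n, c ^ (n - k) * g k = f n := by
  induction n with
  | zero => simp [h0]
  | succ n ih =>
    have hpow : ∀ k ∈ Icc 1 n, c ^ (n + 1 - k) * g k = c * (c ^ (n - k) * g k) := by
      intro k hk
      rw [Nat.sub_add_comm (mem_Icc.1 hk).2, pow_succ]
      ring
    rw [sum_Icc_succ_top (Nat.le_add_left 1 n), sum_congr rfl hpow, ← mul_sum, ih, hsucc,
      Nat.sub_self, pow_zero, one_mul]

theorem qNum_zero (q : ℂ) : qNum q 0 = 0 := by
  simp [qNum]

theorem qNum_three_ne_zero {q : ℂ} (hq3 : q ^ 3 ≠ 1) (hq : q ≠ 1) : qNum q 3 ≠ 0 :=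
  div_ne_zero (sub_ne_zero.2 hq3.symm) (sub_ne_zero.2 hq.symm)

theorem pow_three_mul_qNum_mul_qNum_add_qNum_three_mul {q : ℂ} (hq : q ≠ 1) (n : ℕ) :
    q ^ 3 * qNum q n * qNum q (n + 1) + qNum q 3 * qNum q (2 * n + 4) =
      qNum q (n + 3) * qNum q (n + 4) := by
  have h1 : (1 : ℂ) - q ≠ 0 := sub_ne_zero.2 hq.symm
  simp only [qNum]
  field_simp
  ring

theorem qNum_prod_recurrence {q : ℂ} (hq : q ≠ 1) (n : ℕ) :
    qNum q (n + 1) * qNum q (n + 2) ^ 2 * qNum q (n + 3) ^ 2 * qNum q (n + 4) =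
      q ^ 3 * (qNum q n * qNum q (n + 1) ^ 2 * qNum q (n + 2) ^ 2 * qNum q (n + 3)) +
        qNum q 3 * (qNum q (n + 1) * qNum q (n + 2) ^ 2 * qNum q (n + 3) *
          qNum q (2 * (n + 1) + 2)) := by
  rw [show 2 * (n + 1) + 2 = 2 * n + 4 by ring]
  linear_combination (-(qNum q (n + 1) * qNum q (n + 2) ^ 2 * qNum q (n + 3))) *
    pow_three_mul_qNum_mul_qNum_add_qNum_three_mul hq n

theorem q_analogue_a_q_m_two (q : ℂ) (hq3 : q ^ 3 ≠ 1) (hq : q ≠ 1) (n : ℕ) :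
    ∑ k ∈ Finset.Icc 1 n,
        q ^ (3 * n - 3 * k) * qNum q k * qNum q (k + 1) ^ 2 * qNum q (k + 2) *
          qNum q (2 * k + 2) =
      qNum q n * qNum q (n + 1) ^ 2 * qNum q (n + 2) ^ 2 * qNum q (n + 3) / qNum q 3 := by
  rw [eq_div_iff (qNum_three_ne_zero hq3 hq), sum_mul]
  have hterm : ∀ k ∈ Icc 1 n,
      q ^ (3 * n - 3 * k) * qNum q k * qNum q (k + 1) ^ 2 * qNum q (k + 2) *
          qNum q (2 * k + 2) * qNum q 3 =
        (q ^ 3) ^ (n - k) *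
          (qNum q 3 * (qNum q k * qNum q (k + 1) ^ 2 * qNum q (k + 2) * qNum q (2 * k + 2))) := by
    intro k _
    rw [← pow_mul, Nat.mul_sub]
    ring
  rw [sum_congr rfl hterm]
  exact sum_Icc_pow_mul_eq_of_recurrence (q ^ 3)
    (fun n ↦ qNum q n * qNum q (n + 1) ^ 2 * qNum q (n + 2) ^ 2 * qNum q (n + 3))
    (fun k ↦ qNum q 3 * (qNum q k * qNum q (k + 1) ^ 2 * qNum q (k + 2) * qNum q (2 * k + 2)))
    (by simp [qNum_zero]) (qNum_prod_recurrence hq) n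
end
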